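/- arXiv:2302.00985 — 4 statements merged into one kernel-verified Lean document; each statement's English description precedes it below -/
import Mathlib

section
/- Fix an instance of unrelated-machine scheduling with speed predictions, a schedule produced by the Maximum Density algorithm, and a constant κ ≥ 1. The dual assignment ā_j = w_j C_j, b̄_{it} = (1/κ)∑_{t'≥t} β_{it'}, c̄_{jt} = (1/κ)∑_{t'≥t} γ_{jt'} is nonnegative and satisfies, for every machine i, job j, and time t ≥ r_j: (ā_j s_{ij})/p_j − μ₂κ·b̄_{it} − μ₂κ·c̄_{jt} ≤ w_j (s_{ij}·t)/p_j. -/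
open Finset

/-- The progress of job `j` at time `t`: `q_{jt} = ∑_i s_{ij} y_{ijt}`. -/
def progress {m n : ℕ} (s : Fin m → Fin n → ℝ) (y : Fin m → Fin n → ℕ → ℝ)
    (j : Fin n) (t : ℕ) : ℝ := ∑ i, s i j * y i j t

/-- `C j` is the least time `t` such that `∑_{t'=r_j}^{t} q_{jt'} ≥ p_j`. -/
def CompletesAt {m n : ℕ} (p : Fin n → ℝ) (r : Fin n → ℕ) (s : Fin m → Fin n → ℝ)
    (y : Fin m → Fin n → ℕ → ℝ) (C : Fin n → ℕ) : Prop :=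
  ∀ j, (p j ≤ ∑ t' ∈ Finset.Icc (r j) (C j), progress s y j t') ∧
    (∀ t, t < C j → ¬ (p j ≤ ∑ t' ∈ Finset.Icc (r j) t, progress s y j t'))

/-- A set of machine-job pairs is a matching. -/
def IsMatching {m n : ℕ} (M : Finset (Fin m × Fin n)) : Prop :=
  (∀ e ∈ M, ∀ e' ∈ M, e.1 = e'.1 → e = e') ∧
  (∀ e ∈ M, ∀ e' ∈ M, e.2 = e'.2 → e = e')

/-! Exchange argument: while job `j` is alive at time `t'`, deleting from `M t'` the edges at
machine `i` and at job `j` and adding `(i, j)` gives another matching of alive jobs, so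
maximality yields `δ̂ᵢⱼ ≤ βᵢₜ' + γⱼₜ'`. Summing over `t' ∈ [t, Cⱼ]` gives
`(Cⱼ - t) δ̂ᵢⱼ ≤ κ (b̄ᵢₜ + c̄ⱼₜ)`, and `sᵢⱼ ≤ μ₂ ŝᵢⱼ` turns the predicted density into the true
one at the cost of the factor `μ₂`. -/

section

variable {m n : ℕ}

theorem IsMatching.insert_filter {M : Finset (Fin m × Fin n)} (hM : IsMatching M)
    (i : Fin m) (j : Fin n) :
    IsMatching (insert (i, j) (M.filter fun e => e.1 ≠ i ∧ e.2 ≠ j)) := by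
  constructor
  · intro e he e' he' h
    simp only [mem_insert, mem_filter] at he he'
    rcases he with rfl | ⟨he, hei, -⟩ <;> rcases he' with rfl | ⟨he', hei', -⟩
    exacts [rfl, absurd h.symm hei', absurd h hei, hM.1 e he e' he' h]
  · intro e he e' he' h
    simp only [mem_insert, mem_filter] at he he'
    rcases he with rfl | ⟨he, -, hej⟩ <;> rcases he' with rfl | ⟨he', -, hej'⟩
    exacts [rfl, absurd h.symm hej', absurd h hej, hM.2 e he e' he' h]

theorem sum_le_sum_filter_ne_add_sum_filter_fst_add_sum_filter_snd {α β : Type*}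
    [DecidableEq α] [DecidableEq β] (M : Finset (α × β)) {f : α × β → ℝ}
    (hf : ∀ e, 0 ≤ f e) (a : α) (b : β) :
    ∑ e ∈ M, f e ≤ ∑ e ∈ M.filter (fun e => e.1 ≠ a ∧ e.2 ≠ b), f e +
      (∑ e ∈ M.filter (·.1 = a), f e + ∑ e ∈ M.filter (·.2 = b), f e) := by
  simp only [sum_filter, ← sum_add_distrib]
  refine sum_le_sum fun e _ => ?_
  have := hf e
  split_ifs <;> grind

theorem sum_ite_mem_eq_sum_filter_fst {α β : Type*} [DecidableEq α] [DecidableEq β]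
    [Fintype β] (M : Finset (α × β)) (a : α) (f : α × β → ℝ) :
    ∑ b, (if (a, b) ∈ M then f (a, b) else 0) = ∑ e ∈ M.filter (·.1 = a), f e := by
  rw [← sum_filter]
  exact sum_nbij' (Prod.mk a) Prod.snd (by simp) (by aesop) (by simp) (by aesop) (by simp)

theorem sum_ite_mem_eq_sum_filter_snd {α β : Type*} [DecidableEq α] [DecidableEq β]
    [Fintype α] (M : Finset (α × β)) (b : β) (f : α × β → ℝ) :
    ∑ a, (if (a, b) ∈ M then f (a, b) else 0) = ∑ e ∈ M.filter (·.2 = b), f e := by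
  rw [← sum_filter]
  exact sum_nbij' (·, b) Prod.fst (by simp) (by aesop) (by simp) (by aesop) (by simp)

def IsMaxWeightMatching (P : Fin m × Fin n → Prop) (f : Fin m × Fin n → ℝ)
    (M : Finset (Fin m × Fin n)) : Prop :=
  IsMatching M ∧ (∀ e ∈ M, P e) ∧
    ∀ M', IsMatching M' → (∀ e ∈ M', P e) → ∑ e ∈ M', f e ≤ ∑ e ∈ M, f e

theorem IsMaxWeightMatching.apply_le_sum_add_sum {P : Fin m × Fin n → Prop}
    {f : Fin m × Fin n → ℝ} {M : Finset (Fin m × Fin n)} (hM : IsMaxWeightMatching P f M)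
    (hf : ∀ e, 0 ≤ f e) {i : Fin m} {j : Fin n} (hij : P (i, j)) :
    f (i, j) ≤ (∑ j', if (i, j') ∈ M then f (i, j') else 0) +
      ∑ i', if (i', j) ∈ M then f (i', j) else 0 := by
  set F := M.filter fun e => e.1 ≠ i ∧ e.2 ≠ j
  have hF : ∀ e ∈ insert (i, j) F, P e := by
    simp only [F, mem_insert, mem_filter]
    rintro e (rfl | ⟨he, -⟩)
    exacts [hij, hM.2.1 e he]
  have hmax := hM.2.2 _ (hM.1.insert_filter i j) hF
  rw [sum_insert (by simp)] at hmax
  rw [sum_ite_mem_eq_sum_filter_fst, sum_ite_mem_eq_sum_filter_snd]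
  linarith [sum_le_sum_filter_ne_add_sum_filter_fst_add_sum_filter_snd M hf i j]

end

noncomputable def tailSum (f : ℕ → ℝ) (t : ℕ) : ℝ := ∑' t', if t ≤ t' then f t' else 0

theorem tailSum_nonneg {f : ℕ → ℝ} (hf : ∀ t, 0 ≤ f t) (t : ℕ) : 0 ≤ tailSum f t :=
  tsum_nonneg fun t' => by split_ifs <;> simp [hf]

theorem sum_Icc_le_tailSum {f : ℕ → ℝ} (hf : ∀ t, 0 ≤ f t) (hs : Summable f) (t c : ℕ) :
    ∑ t' ∈ Icc t c, f t' ≤ tailSum f t := by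
  have hs' : Summable fun t' => if t ≤ t' then f t' else 0 :=
    hs.of_nonneg_of_le (fun t' => by split_ifs <;> simp [hf])
      (fun t' => by split_ifs <;> simp [hf])
  calc ∑ t' ∈ Icc t c, f t' = ∑ t' ∈ Icc t c, if t ≤ t' then f t' else 0 :=
        sum_congr rfl fun t' ht' => (if_pos (mem_Icc.1 ht').1).symm
    _ ≤ tailSum f t := hs'.sum_le_tsum _ fun t' _ => by split_ifs <;> simp [hf]

theorem card_Icc_mul_le_tailSum_add {f g : ℕ → ℝ} (hf : ∀ t, 0 ≤ f t) (hfs : Summable f)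
    (hg : ∀ t, 0 ≤ g t) (hgs : Summable g) {t c : ℕ} {δ : ℝ}
    (h : ∀ t' ∈ Icc t c, δ ≤ f t' + g t') :
    #(Icc t c) * δ ≤ tailSum f t + tailSum g t :=
  calc #(Icc t c) * δ = ∑ _t' ∈ Icc t c, δ := by simp
    _ ≤ ∑ t' ∈ Icc t c, (f t' + g t') := sum_le_sum h
    _ ≤ tailSum f t + tailSum g t := by
      rw [sum_add_distrib]
      exact add_le_add (sum_Icc_le_tailSum hf hfs t c) (sum_Icc_le_tailSum hg hgs t c)

theorem sub_le_card_Icc (t c : ℕ) : (c : ℝ) - t ≤ #(Icc t c) := by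
  have : c ≤ #(Icc t c) + t := by simp only [Nat.card_Icc]; omega
  rw [sub_le_iff_le_add]
  exact_mod_cast this

theorem mul_sub_le_of_card_Icc_mul_le {q δ μ T : ℝ} {t c : ℕ} (hq : 0 ≤ q)
    (hqδ : q ≤ μ * δ) (hμ : 0 ≤ μ) (hT : #(Icc t c) * δ ≤ T) :
    q * c - μ * T ≤ q * t := by
  have : q * (c - t) ≤ μ * T :=
    calc q * (c - t) ≤ q * #(Icc t c) := mul_le_mul_of_nonneg_left (sub_le_card_Icc t c) hq
      _ ≤ μ * δ * #(Icc t c) := by gcongr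
      _ ≤ μ * T := by rw [mul_assoc, mul_comm δ]; gcongr
  linarith

theorem summable_of_forall_lt_eq_zero {f : ℕ → ℝ} (N : ℕ) (h : ∀ t, N < t → f t = 0) :
    Summable f :=
  summable_of_ne_finset_zero (s := range (N + 1)) fun t ht => h t (by simpa using ht)

theorem maxDensity_dual_feasible_general
    (m n : ℕ)
    (p w : Fin n → ℝ) (r : Fin n → ℕ) (s shat : Fin m → Fin n → ℝ)
    (hp : ∀ j, 0 < p j) (hw : ∀ j, 0 ≤ w j)
    (hs : ∀ i j, 0 < s i j) (hshat : ∀ i j, 0 < shat i j)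
    (μ₂ : ℝ)
    (hμ₂ub : ∀ i j, s i j / shat i j ≤ μ₂)
    (κ : ℝ) (hκ : 1 ≤ κ)
    -- the algorithm's schedule: at every time `t`, a maximum-weight matching between
    -- machines and alive jobs w.r.t. predicted densities, run at rate 1
    (M : ℕ → Finset (Fin m × Fin n)) (C : Fin n → ℕ)
    (hmatch : ∀ t, IsMatching (M t))
    (halive : ∀ t, ∀ e ∈ M t, r e.2 ≤ t ∧ t ≤ C e.2)
    (hmaxweight : ∀ t, ∀ M' : Finset (Fin m × Fin n), IsMatching M' →
      (∀ e ∈ M', r e.2 ≤ t ∧ t ≤ C e.2) →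
      (∑ e ∈ M', w e.2 * shat e.1 e.2 / p e.2) ≤ ∑ e ∈ M t, w e.2 * shat e.1 e.2 / p e.2)
    -- the values β, γ and the dual assignment ā, b̄, c̄
    (β : Fin m → ℕ → ℝ)
    (hβ : ∀ i t, β i t = ∑ j, if (i, j) ∈ M t then w j * shat i j / p j else 0)
    (γ : Fin n → ℕ → ℝ)
    (hγ : ∀ j t, γ j t = ∑ i, if (i, j) ∈ M t then w j * shat i j / p j else 0)
    (abar : Fin n → ℝ) (habar : ∀ j, abar j = w j * (C j : ℝ))
    (bbar : Fin m → ℕ → ℝ)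
    (hbbar : ∀ i t, bbar i t = (1 / κ) * ∑' t' : ℕ, if t ≤ t' then β i t' else 0)
    (cbar : Fin n → ℕ → ℝ)
    (hcbar : ∀ j t, cbar j t = (1 / κ) * ∑' t' : ℕ, if t ≤ t' then γ j t' else 0) :
    ((∀ j, 0 ≤ abar j) ∧ (∀ i t, 0 ≤ bbar i t) ∧ (∀ j t, 0 ≤ cbar j t)) ∧
      (∀ i j (t : ℕ), r j ≤ t →
        abar j * s i j / p j - μ₂ * κ * bbar i t - μ₂ * κ * cbar j t ≤
          w j * (s i j * (t : ℝ)) / p j) := by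
  set δ : Fin m × Fin n → ℝ := fun e => w e.2 * shat e.1 e.2 / p e.2
  have hδ (e : Fin m × Fin n) : 0 ≤ δ e :=
    div_nonneg (mul_nonneg (hw e.2) (hshat e.1 e.2).le) (hp e.2).le
  have hmax (t) : IsMaxWeightMatching (fun e => r e.2 ≤ t ∧ t ≤ C e.2) δ (M t) :=
    ⟨hmatch t, halive t, hmaxweight t⟩
  have hβ0 (i t) : 0 ≤ β i t :=
    (hβ i t).symm ▸ sum_nonneg fun j _ => ite_nonneg (hδ (i, j)) le_rfl
  have hγ0 (j t) : 0 ≤ γ j t :=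
    (hγ j t).symm ▸ sum_nonneg fun i _ => ite_nonneg (hδ (i, j)) le_rfl
  have hempty (t) (ht : univ.sup C < t) : M t = ∅ := eq_empty_of_forall_notMem fun e he =>
    (halive t e he).2.not_gt (ht.trans_le' (le_sup (mem_univ e.2)))
  have hβs (i) : Summable (β i) :=
    summable_of_forall_lt_eq_zero (univ.sup C) fun t ht => by simp [hβ, hempty t ht]
  have hγs (j) : Summable (γ j) :=
    summable_of_forall_lt_eq_zero (univ.sup C) fun t ht => by simp [hγ, hempty t ht]
  have hκ0 : 0 < κ := zero_lt_one.trans_le hκ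
  refine ⟨⟨fun j => ?_, fun i t => ?_, fun j t => ?_⟩, fun i j t hrt => ?_⟩
  · rw [habar]; exact mul_nonneg (hw j) (Nat.cast_nonneg _)
  · rw [hbbar]; exact mul_nonneg (by positivity) (tailSum_nonneg (hβ0 i) t)
  · rw [hcbar]; exact mul_nonneg (by positivity) (tailSum_nonneg (hγ0 j) t)
  have hμ₂ : 0 ≤ μ₂ := (div_pos (hs i j) (hshat i j)).le.trans (hμ₂ub i j)
  have hdensity : w j * s i j / p j ≤ μ₂ * δ (i, j) := by
    have := (div_le_iff₀ (hshat i j)).1 (hμ₂ub i j)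
    calc w j * s i j / p j ≤ w j * (μ₂ * shat i j) / p j := by gcongr; exacts [(hp j).le, hw j]
      _ = μ₂ * δ (i, j) := by ring
  have hcover (t') (ht' : t' ∈ Icc t (C j)) : δ (i, j) ≤ β i t' + γ j t' := by
    rw [hβ, hγ]
    exact (hmax t').apply_le_sum_add_sum hδ ⟨hrt.trans (mem_Icc.1 ht').1, (mem_Icc.1 ht').2⟩
  have hbound := mul_sub_le_of_card_Icc_mul_le
    (div_nonneg (mul_nonneg (hw j) (hs i j).le) (hp j).le) hdensity hμ₂
    (card_Icc_mul_le_tailSum_add (hβ0 i) (hβs i) (hγ0 j) (hγs j) hcover)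
  rw [tailSum, tailSum] at hbound
  rw [habar, hbbar, hcbar]
  field_simp
  linear_combination hbound

/-- For the Maximum Density algorithm with speed predictions and any `κ ≥ 1`, the dual
assignment `ā, b̄, c̄` is nonnegative and feasible for the dual LP with `α = μ₂κ`. -/
theorem maxDensity_dual_feasible
    (m n : ℕ)
    (p w : Fin n → ℝ) (r : Fin n → ℕ) (s shat : Fin m → Fin n → ℝ)
    (hp : ∀ j, 0 < p j) (hw : ∀ j, 0 ≤ w j)
    (hs : ∀ i j, 0 < s i j) (hshat : ∀ i j, 0 < shat i j)
    (μ₁ μ₂ : ℝ)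
    (hμ₁ub : ∀ i j, shat i j / s i j ≤ μ₁) (hμ₁max : ∃ i j, shat i j / s i j = μ₁)
    (hμ₂ub : ∀ i j, s i j / shat i j ≤ μ₂) (hμ₂max : ∃ i j, s i j / shat i j = μ₂)
    (κ : ℝ) (hκ : 1 ≤ κ)
    -- the algorithm's schedule: at every time `t`, a maximum-weight matching between
    -- machines and alive jobs w.r.t. predicted densities, run at rate 1
    (M : ℕ → Finset (Fin m × Fin n)) (C : Fin n → ℕ) (y : Fin m → Fin n → ℕ → ℝ)
    (hmatch : ∀ t, IsMatching (M t))
    (halive : ∀ t, ∀ e ∈ M t, r e.2 ≤ t ∧ t ≤ C e.2)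
    (hmaxweight : ∀ t, ∀ M' : Finset (Fin m × Fin n), IsMatching M' →
      (∀ e ∈ M', r e.2 ≤ t ∧ t ≤ C e.2) →
      (∑ e ∈ M', w e.2 * shat e.1 e.2 / p e.2) ≤ ∑ e ∈ M t, w e.2 * shat e.1 e.2 / p e.2)
    (hy : ∀ i j t, y i j t = if (i, j) ∈ M t then 1 else 0)
    (hC : CompletesAt p r s y C)
    -- the values β, γ and the dual assignment ā, b̄, c̄
    (β : Fin m → ℕ → ℝ)
    (hβ : ∀ i t, β i t = ∑ j, if (i, j) ∈ M t then w j * shat i j / p j else 0)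
    (γ : Fin n → ℕ → ℝ)
    (hγ : ∀ j t, γ j t = ∑ i, if (i, j) ∈ M t then w j * shat i j / p j else 0)
    (abar : Fin n → ℝ) (habar : ∀ j, abar j = w j * (C j : ℝ))
    (bbar : Fin m → ℕ → ℝ)
    (hbbar : ∀ i t, bbar i t = (1 / κ) * ∑' t' : ℕ, if t ≤ t' then β i t' else 0)
    (cbar : Fin n → ℕ → ℝ)
    (hcbar : ∀ j t, cbar j t = (1 / κ) * ∑' t' : ℕ, if t ≤ t' then γ j t' else 0) :
    ((∀ j, 0 ≤ abar j) ∧ (∀ i t, 0 ≤ bbar i t) ∧ (∀ j t, 0 ≤ cbar j t)) ∧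
      (∀ i j (t : ℕ), r j ≤ t →
        abar j * s i j / p j - μ₂ * κ * bbar i t - μ₂ * κ * cbar j t ≤
          w j * (s i j * (t : ℝ)) / p j) :=
  maxDensity_dual_feasible_general m n p w r s shat hp hw hs hshat μ₂ hμ₂ub κ hκ M C hmatch halive
    hmaxweight β hβ γ hγ abar habar bbar hbbar cbar hcbar
end

section
/- Let J(t) be a finite set of jobs with weights w_j > 0, let ŝ_{ij} > 0 be speeds, and let y_{ijt} ≥ 0 be rates with ∑_{i'} ŝ_{i'j} y_{i'jt} > 0 for each j ∈ J(t). Suppose nonnegative multipliers η_{it} (for each machine i) and θ_{jt} (for each j ∈ J(t)) satisfy the KKT conditions: (1) ŝ_{ij} w_j / (∑_{i'} ŝ_{i'j} y_{i'jt}) ≤ θ_{jt} + η_{it} for all i and j ∈ J(t); (2) y_{ijt}·(ŝ_{ij} w_j / (∑_{i'} ŝ_{i'j} y_{i'jt}) − θ_{jt} − η_{it}) = 0 for all i and j ∈ J(t); (3) θ_{jt}·(∑_i y_{ijt} − 1) = 0 for all j ∈ J(t); (4) η_{it}·(∑_{j∈J(t)} y_{ijt} − 1) = 0 for all i. Then ∑_i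 η_{it} + ∑_{j∈J(t)} θ_{jt} = ∑_{j∈J(t)} w_j. -/
open Finset

/-! Multiply the stationarity condition for `(i, j)` by `y i j` and sum over the machines: since
job `j`'s utility is homogeneous of degree one in its rates, the left side collapses to `w j`,
while complementary slackness in the capacity constraints turns the right side, summed over all
jobs, into `∑ i, η i + ∑ j, θ j`. -/

theorem Finset.sum_mul_mul_div_sum_mul {ι 𝕜 : Type*} [Field 𝕜] (t : Finset ι) (s y : ι → 𝕜)
    (w : 𝕜) (h : ∑ i ∈ t, s i * y i ≠ 0) :
    ∑ i ∈ t, y i * (s i * w / ∑ i' ∈ t, s i' * y i') = w := by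
  calc ∑ i ∈ t, y i * (s i * w / ∑ i' ∈ t, s i' * y i')
      = (∑ i ∈ t, s i * y i) * (w / ∑ i' ∈ t, s i' * y i') := by
        rw [sum_mul]
        exact sum_congr rfl fun i _ => by ring
    _ = w := mul_div_cancel₀ w h

theorem mul_sum_eq_self_of_mul_sum_sub_one_eq_zero {ι R : Type*} [CommRing R] (t : Finset ι)
    (a : R) (y : ι → R) (h : a * (∑ i ∈ t, y i - 1) = 0) : ∑ i ∈ t, y i * a = a := by
  rw [← sum_mul, mul_comm]
  linear_combination h

theorem sum_add_sum_eq_sum_sum_mul_add_of_slackness {ι κ R : Type*} [Fintype ι] [Fintype κ]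
    [CommRing R] (y : ι → κ → R) (η : ι → R) (θ : κ → R)
    (hθ : ∀ j, θ j * (∑ i, y i j - 1) = 0) (hη : ∀ i, η i * (∑ j, y i j - 1) = 0) :
    ∑ i, η i + ∑ j, θ j = ∑ j, ∑ i, y i j * (θ j + η i) := by
  calc ∑ i, η i + ∑ j, θ j = ∑ i, ∑ j, y i j * η i + ∑ j, ∑ i, y i j * θ j := by
        simp only [mul_sum_eq_self_of_mul_sum_sub_one_eq_zero _ _ _ (hη _),
          mul_sum_eq_self_of_mul_sum_sub_one_eq_zero _ _ _ (hθ _)]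
    _ = ∑ j, ∑ i, y i j * (θ j + η i) := by
        rw [sum_comm (f := fun i j => y i j * η i), ← sum_add_distrib]
        simp only [mul_add, sum_add_distrib, add_comm]

theorem pf_kkt_multiplier_sum_general
    (m n : ℕ)
    (w : Fin n → ℝ)
    (shat : Fin m → Fin n → ℝ)
    (y : Fin m → Fin n → ℝ)
    (hden : ∀ j, 0 < ∑ i', shat i' j * y i' j)
    (η : Fin m → ℝ) (θ : Fin n → ℝ)
    (kkt2 : ∀ i j, y i j * (shat i j * w j / (∑ i', shat i' j * y i' j) - (θ j + η i)) = 0)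
    (kkt3 : ∀ j, θ j * ((∑ i, y i j) - 1) = 0)
    (kkt4 : ∀ i, η i * ((∑ j, y i j) - 1) = 0) :
    (∑ i, η i) + (∑ j, θ j) = ∑ j, w j := by
  have stationarity : ∀ i j,
      y i j * (θ j + η i) = y i j * (shat i j * w j / ∑ i', shat i' j * y i' j) := by
    intro i j
    linear_combination -kkt2 i j
  calc (∑ i, η i) + (∑ j, θ j) = ∑ j, ∑ i, y i j * (θ j + η i) :=
        sum_add_sum_eq_sum_sum_mul_add_of_slackness y η θ kkt3 kkt4
    _ = ∑ j, ∑ i, y i j * (shat i j * w j / ∑ i', shat i' j * y i' j) := by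
        simp only [stationarity]
    _ = ∑ j, w j :=
        sum_congr rfl fun j _ => univ.sum_mul_mul_div_sum_mul _ _ _ (hden j).ne'

/-- The KKT conditions of the Proportional Fairness convex program imply
`∑_i η_i + ∑_j θ_j = ∑_j w_j`. -/
theorem pf_kkt_multiplier_sum
    (m n : ℕ)
    (w : Fin n → ℝ) (hw : ∀ j, 0 < w j)
    (shat : Fin m → Fin n → ℝ) (hshat : ∀ i j, 0 < shat i j)
    (y : Fin m → Fin n → ℝ) (hy : ∀ i j, 0 ≤ y i j)
    (hden : ∀ j, 0 < ∑ i', shat i' j * y i' j)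
    (η : Fin m → ℝ) (θ : Fin n → ℝ)
    (hη : ∀ i, 0 ≤ η i) (hθ : ∀ j, 0 ≤ θ j)
    (kkt1 : ∀ i j, shat i j * w j / (∑ i', shat i' j * y i' j) ≤ θ j + η i)
    (kkt2 : ∀ i j, y i j * (shat i j * w j / (∑ i', shat i' j * y i' j) - (θ j + η i)) = 0)
    (kkt3 : ∀ j, θ j * ((∑ i, y i j) - 1) = 0)
    (kkt4 : ∀ i, η i * ((∑ j, y i j) - 1) = 0) :
    (∑ i, η i) + (∑ j, θ j) = ∑ j, w j :=
  pf_kkt_multiplier_sum_general m n w shat y hden η θ kkt2 kkt3 kkt4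
end

section
/- Fix an instance of unrelated-machine scheduling with speed predictions in which all weights w_j are positive integers, a schedule produced by the Proportional Fairness algorithm, and a constant 0 < λ < 1. Define ā_j = ∑_{t'=0}^{C_j} w_j·1[q_{jt'}/p_j ≤ ζ_{t'}]. Then ∑_{j∈J} ā_j ≥ λ · ∑_{j∈J} w_j C_j. -/
open Finset

/-! At time `t` the threshold `ζ_t` sits at position `⌊λ W_t⌋` of the sorted weighted list, so
at least `⌊λ W_t⌋ + 1 ≥ λ W_t` of its `W_t` entries are `≤ ζ_t`: the unfinished jobs counted by `ā`
at time `t` carry weight at least `λ W_t`. Summing over `t`,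
`∑_j ā_j ≥ λ ∑_t W_t = λ ∑_j w_j (C_j + 1) ≥ λ ∑_j w_j C_j`. -/

theorem List.Pairwise.succ_le_countP_le_getD {α : Type*} [LinearOrder α] {L : List α}
    (hL : L.Pairwise (· ≤ ·)) {k : ℕ} (hk : k < L.length) (d : α) :
    k + 1 ≤ L.countP (· ≤ L.getD k d) := by
  have hprefix : ∀ a ∈ L.take (k + 1), a ≤ L.getD k d := by
    intro a ha
    obtain ⟨i, hi, rfl⟩ := List.mem_take_iff_getElem.mp ha
    rw [List.getD_eq_getElem _ _ hk]
    rcases (Nat.lt_succ_iff.mp (lt_min_iff.mp hi).1).lt_or_eq with hik | rfl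
    · exact hL.rel_get_of_lt (a := ⟨i, (lt_min_iff.mp hi).2⟩) (b := ⟨k, hk⟩) hik
    · rfl
  calc k + 1 = (L.take (k + 1)).length := by rw [List.length_take]; omega
    _ = (L.take (k + 1)).countP (· ≤ L.getD k d) :=
        (List.countP_eq_length.mpr fun a ha => decide_eq_true (hprefix a ha)).symm
    _ ≤ L.countP (· ≤ L.getD k d) := (List.take_sublist _ _).countP_le

theorem Multiset.mul_card_le_countP_le_quantile (M : Multiset ℝ) {lam : ℝ} (hlam : lam < 1) :
    lam * card M ≤
      M.countP (· ≤ (M.sort (· ≤ ·)).getD ⌊lam * card M⌋₊ 0) := by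
  rcases Nat.eq_zero_or_pos (card M) with hM | hM
  · simp [hM]
  have hk : ⌊lam * card M⌋₊ < (M.sort (· ≤ ·)).length := by
    rw [Multiset.length_sort, Nat.floor_lt' hM.ne']
    exact mul_lt_of_lt_one_left (by exact_mod_cast hM) hlam
  have hcount := (M.pairwise_sort (· ≤ ·)).succ_le_countP_le_getD hk 0
  rw [← Multiset.coe_countP, Multiset.sort_eq] at hcount
  calc lam * card M ≤ ⌊lam * card M⌋₊ + 1 := (Nat.lt_floor_add_one _).le
    _ ≤ _ := by exact_mod_cast hcount

theorem Multiset.countP_sum_replicate {ι α : Type*} (P : α → Prop) [DecidablePred P]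
    (U : Finset ι) (w : ι → ℕ) (x : ι → α) :
    (∑ j ∈ U, replicate (w j) (x j)).countP P = ∑ j ∈ U, if P (x j) then w j else 0 := by
  rw [← coe_countPAddMonoidHom, map_sum]
  refine Finset.sum_congr rfl fun j _ => ?_
  simp [← coe_replicate, List.countP_replicate]

theorem sum_range_succ_comm_sum_filter {ι M : Type*} [Fintype ι] [AddCommMonoid M]
    (C : ι → ℕ) {T : ℕ} (hT : ∀ j, C j < T) (f : ι → ℕ → M) :
    ∑ j, ∑ t ∈ range (C j + 1), f j t = ∑ t ∈ range T, ∑ j with t ≤ C j, f j t :=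
  Finset.sum_comm' fun j t => by
    simp only [mem_univ, mem_range, mem_filter, true_and]
    have := hT j
    omega

noncomputable def weightedQuantile {ι : Type*} (U : Finset ι) (w : ι → ℕ) (x : ι → ℝ) (lam : ℝ) :
    ℝ :=
  ((∑ j ∈ U, Multiset.replicate (w j) (x j)).sort (· ≤ ·)).getD
    ⌊lam * ((∑ j ∈ U, w j : ℕ) : ℝ)⌋₊ 0

theorem mul_sum_le_sum_ite_le_weightedQuantile {ι : Type*} (U : Finset ι) (w : ι → ℕ)
    (x : ι → ℝ) {lam : ℝ} (hlam : lam < 1) :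
    lam * ((∑ j ∈ U, w j : ℕ) : ℝ) ≤
      ∑ j ∈ U, if x j ≤ weightedQuantile U w x lam then (w j : ℝ) else 0 := by
  have h := Multiset.mul_card_le_countP_le_quantile
    (∑ j ∈ U, Multiset.replicate (w j) (x j)) hlam
  simp only [Multiset.card_sum, Multiset.card_replicate, Multiset.countP_sum_replicate] at h
  exact_mod_cast h

theorem pf_abar_lower_bound_general
    (m n : ℕ)
    (p : Fin n → ℝ) (w : Fin n → ℕ) (s : Fin m → Fin n → ℝ)
    (lam : ℝ) (hlam0 : 0 < lam) (hlam1 : lam < 1)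
    -- the algorithm's schedule: at every time `t`, the rates on the alive jobs
    -- `J(t) = {j : r j ≤ t ≤ C j}` optimize the proportional-fairness convex program
    (y : Fin m → Fin n → ℕ → ℝ) (C : Fin n → ℕ)
    -- unfinished jobs `U_t`, their total weight `W_t`, and the quantile value `ζ_t`
    (U : ℕ → Finset (Fin n)) (hU : ∀ t, U t = univ.filter (fun j => t ≤ C j))
    (W : ℕ → ℕ) (hW : ∀ t, W t = ∑ j ∈ U t, w j)
    (ζ : ℕ → ℝ)
    (hζ : ∀ t, ζ t = (Multiset.sort
        (∑ j ∈ U t, Multiset.replicate (w j) (progress s y j t / p j)) (· ≤ ·)).getD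
      (Nat.floor (lam * (W t : ℝ))) 0)
    -- the duals ā
    (abar : Fin n → ℝ)
    (habar : ∀ j, abar j = ∑ t' ∈ Finset.range (C j + 1),
      if progress s y j t' / p j ≤ ζ t' then (w j : ℝ) else 0) :
    lam * (∑ j, (w j : ℝ) * (C j : ℝ)) ≤ ∑ j, abar j := by
  set a : Fin n → ℕ → ℝ := fun j t => if progress s y j t / p j ≤ ζ t then (w j : ℝ) else 0
  have hT : ∀ j, C j < univ.sup C + 1 := fun j => Nat.lt_succ_of_le (le_sup (mem_univ j))
  have hquantile : ∀ t, lam * (W t : ℝ) ≤ ∑ j ∈ U t, a j t := fun t => by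
    simpa only [a, hζ t, hW t, weightedQuantile] using
      mul_sum_le_sum_ite_le_weightedQuantile (U t) w (fun j => progress s y j t / p j) hlam1
  have hweight : ∑ j, (w j : ℝ) * C j ≤ ∑ t ∈ range (univ.sup C + 1), (W t : ℝ) := by
    calc ∑ j, (w j : ℝ) * C j ≤ ∑ j, ∑ _t ∈ range (C j + 1), (w j : ℝ) :=
          sum_le_sum fun j _ => by
            rw [sum_const, card_range, nsmul_eq_mul, mul_comm]
            gcongr
            exact_mod_cast (C j).le_succ
      _ = _ := by simp only [sum_range_succ_comm_sum_filter C hT, hW, hU, Nat.cast_sum]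
  calc lam * ∑ j, (w j : ℝ) * C j ≤ lam * ∑ t ∈ range (univ.sup C + 1), (W t : ℝ) := by gcongr
    _ ≤ ∑ t ∈ range (univ.sup C + 1), ∑ j ∈ U t, a j t := by
        rw [mul_sum]; exact sum_le_sum fun t _ => hquantile t
    _ = ∑ j, abar j := by simp only [← sum_range_succ_comm_sum_filter C hT, hU, habar, a]

/-- For Proportional Fairness with integral weights, the duals
`ā_j = ∑_{t'=0}^{C_j} w_j·1[q_{jt'}/p_j ≤ ζ_{t'}]` satisfy `∑_j ā_j ≥ λ · ALG`. -/
theorem pf_abar_lower_bound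
    (m n : ℕ)
    (p : Fin n → ℝ) (w : Fin n → ℕ) (r : Fin n → ℕ) (s shat : Fin m → Fin n → ℝ)
    (hp : ∀ j, 0 < p j) (hw : ∀ j, 0 < w j)
    (hs : ∀ i j, 0 < s i j) (hshat : ∀ i j, 0 < shat i j)
    (lam : ℝ) (hlam0 : 0 < lam) (hlam1 : lam < 1)
    -- the algorithm's schedule: at every time `t`, the rates on the alive jobs
    -- `J(t) = {j : r j ≤ t ≤ C j}` optimize the proportional-fairness convex program
    (y : Fin m → Fin n → ℕ → ℝ) (C : Fin n → ℕ)
    (hdead : ∀ i j t, ¬ (r j ≤ t ∧ t ≤ C j) → y i j t = 0)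
    (hynn : ∀ i j t, 0 ≤ y i j t)
    (hymach : ∀ i t, (∑ j ∈ univ.filter (fun j => r j ≤ t ∧ t ≤ C j), y i j t) ≤ 1)
    (hyjob : ∀ j t, (∑ i, y i j t) ≤ 1)
    (hopt : ∀ (t : ℕ) (z : Fin m → Fin n → ℝ), (∀ i j, 0 ≤ z i j) →
      (∀ i, (∑ j ∈ univ.filter (fun j => r j ≤ t ∧ t ≤ C j), z i j) ≤ 1) →
      (∀ j ∈ univ.filter (fun j => r j ≤ t ∧ t ≤ C j), (∑ i, z i j) ≤ 1) →
      (∑ j ∈ univ.filter (fun j => r j ≤ t ∧ t ≤ C j),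
          (w j : ℝ) * Real.log (∑ i, shat i j * z i j)) ≤
        ∑ j ∈ univ.filter (fun j => r j ≤ t ∧ t ≤ C j),
          (w j : ℝ) * Real.log (∑ i, shat i j * y i j t))
    (hC : CompletesAt p r s y C)
    -- unfinished jobs `U_t`, their total weight `W_t`, and the quantile value `ζ_t`
    (U : ℕ → Finset (Fin n)) (hU : ∀ t, U t = univ.filter (fun j => t ≤ C j))
    (W : ℕ → ℕ) (hW : ∀ t, W t = ∑ j ∈ U t, w j)
    (ζ : ℕ → ℝ)
    (hζ : ∀ t, ζ t = (Multiset.sort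
        (∑ j ∈ U t, Multiset.replicate (w j) (progress s y j t / p j)) (· ≤ ·)).getD
      (Nat.floor (lam * (W t : ℝ))) 0)
    -- the duals ā
    (abar : Fin n → ℝ)
    (habar : ∀ j, abar j = ∑ t' ∈ Finset.range (C j + 1),
      if progress s y j t' / p j ≤ ζ t' then (w j : ℝ) else 0) :
    lam * (∑ j, (w j : ℝ) * (C j : ℝ)) ≤ ∑ j, abar j :=
  pf_abar_lower_bound_general m n p w s lam hlam0 hlam1 y C U hU W hW ζ hζ abar habar
end

section
/- Fix an instance on related machines (s_{ij} = s_i) that are speed-ordered (s_1 ≥ … ≥ s_m), the schedule produced by Algorithm Maximum Density for speed-ordered machines, and a constant κ ≥ 1. Then the dual assignment ā_j = w_j C_j, b̄_{it} = (1/κ)∑_{t'≥t} β_{it'}, c̄_{jt} = (1/κ)∑_{t'≥t} γ_{jt'} is nonnegative and satisfies, for every machine i, job j, and time t ≥ r_j: (ā_j s_i)/p_j − κ·b̄_{it} − κ·c̄_{jt} ≤ w_j (s_i·t)/p_j. -/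
/-!
At a time `t'` at which job `j` is alive, either `j` runs on a machine at least as fast as
machine `i`, so that `γ_{jt'} ≥ w_j s_i / p_j`, or machine `i` runs a job of at least the density
of `j`, so that `β_{it'} ≥ w_j s_i / p_j`. Summing over `t' ∈ [t, C_j)` gives
`κ b̄_{it} + κ c̄_{jt} ≥ (C_j - t) w_j s_i / p_j`, which is the dual constraint.
-/

open Finset

/-- Feasibility of the rates of a schedule. -/
def Feasible {m n : ℕ} (r : Fin n → ℕ) (y : Fin m → Fin n → ℕ → ℝ) : Prop :=
  (∀ i j t, 0 ≤ y i j t ∧ y i j t ≤ 1) ∧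
  (∀ i j t, t < r j → y i j t = 0) ∧
  (∀ j t, (∑ i, y i j t) ≤ 1) ∧
  (∀ i t, (∑ j, y i j t) ≤ 1)

noncomputable def suffixSum (f : ℕ → ℝ) (t : ℕ) : ℝ := ∑' t', if t ≤ t' then f t' else 0

lemma suffixSum_nonneg {f : ℕ → ℝ} (hf : ∀ t, 0 ≤ f t) (t : ℕ) : 0 ≤ suffixSum f t :=
  tsum_nonneg fun t' => ite_nonneg (hf t') le_rfl

lemma sum_Ico_le_suffixSum {f : ℕ → ℝ} (hf : ∀ t, 0 ≤ f t) (hfin : (Function.support f).Finite)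
    (a b : ℕ) : ∑ t ∈ Ico a b, f t ≤ suffixSum f a := by
  have hsum : Summable fun t => if a ≤ t then f t else 0 :=
    summable_of_hasFiniteSupport <| hfin.subset fun t ht =>
      by_contra fun h => ht (by simp [Function.notMem_support.1 h])
  calc ∑ t ∈ Ico a b, f t = ∑ t ∈ Ico a b, if a ≤ t then f t else 0 :=
        sum_congr rfl fun t ht => (if_pos (mem_Ico.1 ht).1).symm
    _ ≤ _ := hsum.sum_le_tsum _ fun t _ => ite_nonneg (hf t) le_rfl

lemma sub_mul_le_suffixSum_add_suffixSum {f g : ℕ → ℝ} (hf : ∀ t, 0 ≤ f t)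
    (hg : ∀ t, 0 ≤ g t) (hf_fin : (Function.support f).Finite)
    (hg_fin : (Function.support g).Finite) {a b : ℕ} {d : ℝ} (hd : 0 ≤ d)
    (h : ∀ t ∈ Ico a b, d ≤ f t + g t) : ((b : ℝ) - a) * d ≤ suffixSum f a + suffixSum g a :=
  calc ((b : ℝ) - a) * d ≤ #(Ico a b) • d := by
        rw [nsmul_eq_mul, Nat.card_Ico]
        exact mul_le_mul_of_nonneg_right (sub_le_iff_le_add.2 (by exact_mod_cast le_tsub_add)) hd
    _ ≤ ∑ t ∈ Ico a b, (f t + g t) := card_nsmul_le_sum _ _ _ h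
    _ = ∑ t ∈ Ico a b, f t + ∑ t ∈ Ico a b, g t := sum_add_distrib
    _ ≤ _ := add_le_add (sum_Ico_le_suffixSum hf hf_fin a b) (sum_Ico_le_suffixSum hg hg_fin a b)

namespace MaxDensity

variable {ι : Type*}

lemma exists_rank_eq {A : Finset ι} {rank : ι → ℕ} (hrank_lt : ∀ j ∈ A, rank j < #A)
    (hrank_inj : ∀ j j', j ∈ A → j' ∈ A → rank j = rank j' → j = j') {k : ℕ} (hk : k < #A) :
    ∃ j ∈ A, rank j = k := by
  obtain ⟨j, hj, rfl⟩ := surj_on_of_inj_on_of_card_le (t := range #A) (fun j _ => rank j)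
    (fun j hj => mem_range.2 (hrank_lt j hj)) (fun j j' hj hj' => hrank_inj j j' hj hj')
    (card_range _).le k (mem_range.2 hk)
  exact ⟨j, hj, rfl⟩

variable [DecidableEq ι] {m : ℕ}

/-- `γ_{jt}` at a single time `t`, where `A` is the set of alive jobs and job `j ∈ A` runs on
machine `rank j`. -/
noncomputable def dualGamma (p w : ι → ℝ) (s : Fin m → ℝ) (A : Finset ι) (rank : ι → ℕ)
    (j : ι) : ℝ :=
  ∑ i : Fin m, if j ∈ A ∧ (i : ℕ) = rank j then w j * s i / p j else 0

variable {p w : ι → ℝ} {s : Fin m → ℝ} {A : Finset ι} {rank : ι → ℕ}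

lemma dualGamma_nonneg (hp : ∀ j, 0 ≤ p j) (hw : ∀ j, 0 ≤ w j) (hs : ∀ i, 0 ≤ s i)
    (j : ι) : 0 ≤ dualGamma p w s A rank j :=
  sum_nonneg fun i _ => ite_nonneg (div_nonneg (mul_nonneg (hw j) (hs i)) (hp j)) le_rfl

@[simp]
lemma dualGamma_empty (j : ι) : dualGamma p w s ∅ rank j = 0 := by
  simp [dualGamma]

lemma finite_support_dualGamma {A : ℕ → Finset ι} {N : ℕ} (hA : ∀ t, N < t → A t = ∅)
    (rank : ℕ → ι → ℕ) (j : ι) :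
    (Function.support fun t => dualGamma p w s (A t) (rank t) j).Finite :=
  (Set.finite_Iic N).subset fun t ht =>
    Set.mem_Iic.2 <| not_lt.1 fun htN => ht (by simp [hA t htN])

lemma le_dualGamma_of_rank_le (hp : ∀ j, 0 ≤ p j) (hw : ∀ j, 0 ≤ w j) (hs : ∀ i, 0 ≤ s i)
    (hso : Antitone s) {i : Fin m} {j : ι} (hj : j ∈ A) (hi : rank j ≤ i) :
    w j * s i / p j ≤ dualGamma p w s A rank j := by
  let i' : Fin m := ⟨rank j, hi.trans_lt i.isLt⟩
  calc w j * s i / p j ≤ w j * s i' / p j :=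
        div_le_div_of_nonneg_right (mul_le_mul_of_nonneg_left (hso hi) (hw j)) (hp j)
    _ = if j ∈ A ∧ (i' : ℕ) = rank j then w j * s i' / p j else 0 := (if_pos ⟨hj, rfl⟩).symm
    _ ≤ dualGamma p w s A rank j :=
        single_le_sum
          (f := fun i : Fin m => if j ∈ A ∧ (i : ℕ) = rank j then w j * s i / p j else 0)
          (fun i _ => ite_nonneg (div_nonneg (mul_nonneg (hw j) (hs i)) (hp j)) le_rfl)
          (mem_univ i')

variable [Fintype ι]

noncomputable def dualBeta (p w : ι → ℝ) (s : Fin m → ℝ) (A : Finset ι) (rank : ι → ℕ)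
    (i : Fin m) : ℝ :=
  ∑ j, if j ∈ A ∧ (i : ℕ) = rank j then w j * s i / p j else 0

lemma dualBeta_nonneg (hp : ∀ j, 0 ≤ p j) (hw : ∀ j, 0 ≤ w j) (hs : ∀ i, 0 ≤ s i)
    (i : Fin m) : 0 ≤ dualBeta p w s A rank i :=
  sum_nonneg fun j _ => ite_nonneg (div_nonneg (mul_nonneg (hw j) (hs i)) (hp j)) le_rfl

@[simp]
lemma dualBeta_empty (i : Fin m) : dualBeta p w s ∅ rank i = 0 := by
  simp [dualBeta]

lemma finite_support_dualBeta {A : ℕ → Finset ι} {N : ℕ} (hA : ∀ t, N < t → A t = ∅)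
    (rank : ℕ → ι → ℕ) (i : Fin m) :
    (Function.support fun t => dualBeta p w s (A t) (rank t) i).Finite :=
  (Set.finite_Iic N).subset fun t ht =>
    Set.mem_Iic.2 <| not_lt.1 fun htN => ht (by simp [hA t htN])

lemma le_dualBeta_of_lt_rank (hp : ∀ j, 0 ≤ p j) (hw : ∀ j, 0 ≤ w j) (hs : ∀ i, 0 ≤ s i)
    (hrank_lt : ∀ j ∈ A, rank j < #A)
    (hrank_inj : ∀ j j', j ∈ A → j' ∈ A → rank j = rank j' → j = j')
    (hrank_mono : ∀ j j', j ∈ A → j' ∈ A → rank j ≤ rank j' → w j' / p j' ≤ w j / p j)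
    {i : Fin m} {j : ι} (hj : j ∈ A) (hi : (i : ℕ) < rank j) :
    w j * s i / p j ≤ dualBeta p w s A rank i := by
  obtain ⟨j', hj', hij'⟩ := exists_rank_eq hrank_lt hrank_inj (hi.trans (hrank_lt j hj))
  calc w j * s i / p j = w j / p j * s i := by ring
    _ ≤ w j' / p j' * s i :=
        mul_le_mul_of_nonneg_right (hrank_mono j' j hj' hj (hij' ▸ hi.le)) (hs i)
    _ = if j' ∈ A ∧ (i : ℕ) = rank j' then w j' * s i / p j' else 0 := by
        rw [if_pos ⟨hj', hij'.symm⟩]; ring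
    _ ≤ dualBeta p w s A rank i :=
        single_le_sum
          (f := fun j : ι => if j ∈ A ∧ (i : ℕ) = rank j then w j * s i / p j else 0)
          (fun j _ => ite_nonneg (div_nonneg (mul_nonneg (hw j) (hs i)) (hp j)) le_rfl)
          (mem_univ j')

lemma density_mul_le_dualBeta_add_dualGamma (hp : ∀ j, 0 ≤ p j) (hw : ∀ j, 0 ≤ w j)
    (hs : ∀ i, 0 ≤ s i) (hso : Antitone s) (hrank_lt : ∀ j ∈ A, rank j < #A)
    (hrank_inj : ∀ j j', j ∈ A → j' ∈ A → rank j = rank j' → j = j')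
    (hrank_mono : ∀ j j', j ∈ A → j' ∈ A → rank j ≤ rank j' → w j' / p j' ≤ w j / p j)
    (i : Fin m) {j : ι} (hj : j ∈ A) :
    w j * s i / p j ≤ dualBeta p w s A rank i + dualGamma p w s A rank j := by
  rcases le_or_gt (rank j) i with hi | hi
  · exact (le_dualGamma_of_rank_le hp hw hs hso hj hi).trans
      (le_add_of_nonneg_left (dualBeta_nonneg hp hw hs i))
  · exact (le_dualBeta_of_lt_rank hp hw hs hrank_lt hrank_inj hrank_mono hj hi).trans
      (le_add_of_nonneg_right (dualGamma_nonneg hp hw hs j))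

end MaxDensity
theorem maxDensity_speed_ordered_dual_feasible_general
    (m n : ℕ)
    (p w : Fin n → ℝ) (r : Fin n → ℕ) (s : Fin m → ℝ)
    (hp : ∀ j, 0 < p j) (hw : ∀ j, 0 ≤ w j)
    (hs : ∀ i, 0 < s i)
    -- speed-ordered related machines: `s 1 ≥ s 2 ≥ … ≥ s m`
    (hso : ∀ i i' : Fin m, i ≤ i' → s i' ≤ s i)
    -- the algorithm's schedule: at every time `t`, the alive jobs
    -- `J(t) = {j : r j ≤ t ≤ C j}` are ranked by non-increasing density `w j / p j`,
    -- and the `k`-th job is processed with rate 1 on machine `k` (for `k ≤ min{m,|J(t)|}`)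
    (C : Fin n → ℕ) (rank : ℕ → Fin n → ℕ)
    (A : ℕ → Finset (Fin n)) (hA : ∀ t, A t = univ.filter (fun j => r j ≤ t ∧ t ≤ C j))
    (hrank_lt : ∀ t j, j ∈ A t → rank t j < (A t).card)
    (hrank_inj : ∀ t j j', j ∈ A t → j' ∈ A t → rank t j = rank t j' → j = j')
    (hrank_mono : ∀ t j j', j ∈ A t → j' ∈ A t → rank t j ≤ rank t j' →
      w j' / p j' ≤ w j / p j)
    (κ : ℝ) (hκ : 1 ≤ κ)
    -- the values β, γ (from the matching `M_t` induced by the ranks)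
    (β : Fin m → ℕ → ℝ)
    (hβ : ∀ i t, β i t = ∑ j, if j ∈ A t ∧ (i : ℕ) = rank t j then w j * s i / p j else 0)
    (γ : Fin n → ℕ → ℝ)
    (hγ : ∀ j t, γ j t = ∑ i : Fin m, if j ∈ A t ∧ (i : ℕ) = rank t j then w j * s i / p j else 0)
    -- the dual assignment ā, b̄, c̄
    (abar : Fin n → ℝ) (habar : ∀ j, abar j = w j * (C j : ℝ))
    (bbar : Fin m → ℕ → ℝ)
    (hbbar : ∀ i t, bbar i t = (1 / κ) * ∑' t' : ℕ, if t ≤ t' then β i t' else 0)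
    (cbar : Fin n → ℕ → ℝ)
    (hcbar : ∀ j t, cbar j t = (1 / κ) * ∑' t' : ℕ, if t ≤ t' then γ j t' else 0) :
    ((∀ j, 0 ≤ abar j) ∧ (∀ i t, 0 ≤ bbar i t) ∧ (∀ j t, 0 ≤ cbar j t)) ∧
      (∀ i j (t : ℕ), r j ≤ t →
        abar j * s i / p j - κ * bbar i t - κ * cbar j t ≤
          w j * (s i * (t : ℝ)) / p j) := by
  open MaxDensity in
  have hp0 (j) : 0 ≤ p j := (hp j).le
  have hs0 (i) : 0 ≤ s i := (hs i).le
  have hκ0 : 0 < κ := zero_lt_one.trans_le hκ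
  have hβ_nonneg (i t) : 0 ≤ β i t := hβ i t ▸ dualBeta_nonneg hp0 hw hs0 i
  have hγ_nonneg (j t) : 0 ≤ γ j t := hγ j t ▸ dualGamma_nonneg hp0 hw hs0 j
  obtain ⟨N, hN⟩ : ∃ N, ∀ t, N < t → A t = ∅ := ⟨univ.sup C, fun t ht => by
    rw [hA]
    exact filter_eq_empty_iff.2 fun j _ hj => (hj.2.trans (le_sup (mem_univ j))).not_gt ht⟩
  have hβ_finite (i) : (Function.support (β i)).Finite :=
    funext (hβ i) ▸ finite_support_dualBeta hN rank i
  have hγ_finite (j) : (Function.support (γ j)).Finite :=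
    funext (hγ j) ▸ finite_support_dualGamma hN rank j
  have hκbbar (i t) : κ * bbar i t = suffixSum (β i) t := by
    rw [hbbar, one_div, mul_inv_cancel_left₀ hκ0.ne', suffixSum]
  have hκcbar (j t) : κ * cbar j t = suffixSum (γ j) t := by
    rw [hcbar, one_div, mul_inv_cancel_left₀ hκ0.ne', suffixSum]
  refine ⟨⟨fun j => habar j ▸ mul_nonneg (hw j) (Nat.cast_nonneg _),
    fun i t => hbbar i t ▸ mul_nonneg (one_div_nonneg.2 hκ0.le) (suffixSum_nonneg (hβ_nonneg i) t),
    fun j t => hcbar j t ▸ mul_nonneg (one_div_nonneg.2 hκ0.le) (suffixSum_nonneg (hγ_nonneg j) t)⟩,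
    fun i j t hrt => ?_⟩
  have hstep (t') (ht' : t' ∈ Ico t (C j)) : w j * s i / p j ≤ β i t' + γ j t' := by
    have halive : j ∈ A t' := by
      rw [hA, mem_filter]
      exact ⟨mem_univ j, hrt.trans (mem_Ico.1 ht').1, (mem_Ico.1 ht').2.le⟩
    rw [hβ, hγ]
    exact density_mul_le_dualBeta_add_dualGamma hp0 hw hs0 hso (hrank_lt t') (hrank_inj t')
      (hrank_mono t') i halive
  have hdual := sub_mul_le_suffixSum_add_suffixSum (hβ_nonneg i) (hγ_nonneg j) (hβ_finite i)
    (hγ_finite j) (div_nonneg (mul_nonneg (hw j) (hs0 i)) (hp0 j)) hstep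
  rw [habar, hκbbar, hκcbar]
  linarith [show w j * C j * s i / p j - w j * (s i * t) / p j
    = ((C j : ℝ) - t) * (w j * s i / p j) by ring]

/-- For the Maximum Density algorithm on speed-ordered related machines and any `κ ≥ 1`,
the dual assignment `ā, b̄, c̄` is nonnegative and feasible for the dual LP with `α = κ`. -/
theorem maxDensity_speed_ordered_dual_feasible
    (m n : ℕ)
    (p w : Fin n → ℝ) (r : Fin n → ℕ) (s : Fin m → ℝ)
    (hp : ∀ j, 0 < p j) (hw : ∀ j, 0 ≤ w j)
    (hs : ∀ i, 0 < s i)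
    -- speed-ordered related machines: `s 1 ≥ s 2 ≥ … ≥ s m`
    (hso : ∀ i i' : Fin m, i ≤ i' → s i' ≤ s i)
    -- the algorithm's schedule: at every time `t`, the alive jobs
    -- `J(t) = {j : r j ≤ t ≤ C j}` are ranked by non-increasing density `w j / p j`,
    -- and the `k`-th job is processed with rate 1 on machine `k` (for `k ≤ min{m,|J(t)|}`)
    (C : Fin n → ℕ) (rank : ℕ → Fin n → ℕ)
    (A : ℕ → Finset (Fin n)) (hA : ∀ t, A t = univ.filter (fun j => r j ≤ t ∧ t ≤ C j))
    (hrank_lt : ∀ t j, j ∈ A t → rank t j < (A t).card)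
    (hrank_inj : ∀ t j j', j ∈ A t → j' ∈ A t → rank t j = rank t j' → j = j')
    (hrank_mono : ∀ t j j', j ∈ A t → j' ∈ A t → rank t j ≤ rank t j' →
      w j' / p j' ≤ w j / p j)
    (y : Fin m → Fin n → ℕ → ℝ)
    (hy : ∀ i j t, y i j t = if j ∈ A t ∧ (i : ℕ) = rank t j then 1 else 0)
    (hC : CompletesAt p r (fun i _ => s i) y C)
    (κ : ℝ) (hκ : 1 ≤ κ)
    -- the values β, γ (from the matching `M_t` induced by the ranks)
    (β : Fin m → ℕ → ℝ)
    (hβ : ∀ i t, β i t = ∑ j, if j ∈ A t ∧ (i : ℕ) = rank t j then w j * s i / p j else 0)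
    (γ : Fin n → ℕ → ℝ)
    (hγ : ∀ j t, γ j t = ∑ i : Fin m, if j ∈ A t ∧ (i : ℕ) = rank t j then w j * s i / p j else 0)
    -- the dual assignment ā, b̄, c̄
    (abar : Fin n → ℝ) (habar : ∀ j, abar j = w j * (C j : ℝ))
    (bbar : Fin m → ℕ → ℝ)
    (hbbar : ∀ i t, bbar i t = (1 / κ) * ∑' t' : ℕ, if t ≤ t' then β i t' else 0)
    (cbar : Fin n → ℕ → ℝ)
    (hcbar : ∀ j t, cbar j t = (1 / κ) * ∑' t' : ℕ, if t ≤ t' then γ j t' else 0) :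
    ((∀ j, 0 ≤ abar j) ∧ (∀ i t, 0 ≤ bbar i t) ∧ (∀ j t, 0 ≤ cbar j t)) ∧
      (∀ i j (t : ℕ), r j ≤ t →
        abar j * s i / p j - κ * bbar i t - κ * cbar j t ≤
          w j * (s i * (t : ℝ)) / p j) :=
  maxDensity_speed_ordered_dual_feasible_general m n p w r s hp hw hs hso C rank A hA hrank_lt
    hrank_inj hrank_mono κ hκ β hβ γ hγ abar habar bbar hbbar cbar hcbar
end
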